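/- arXiv:2501.08884 — 3 statements merged into one kernel-verified Lean document; each statement's English description precedes it below -/
import Mathlib

section
/- Let Alg be a consistent scenario decision algorithm that is permutation invariant and stable with ρ(Alg) ≤ d. Let N ≥ d and m ≥ d be integers, let I ⊆ {1,...,N} with |I| = d, and let (j_1,...,j_m) ∈ {1,...,N}^m be such that there exists I' = {i_1,...,i_d} ⊆ {1,...,m} with I = {j_{i_1},...,j_{i_d}}. Then for every tuple z = (z_1,...,z_N) ∈ Z^N: if I is a compression set for z, then I' is a compression set for the tuple z' = (z_{j_1},...,z_{j_m}). -/
open MeasureTheory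

section Scenario

variable {X Z : Type*}

/-- The subtuple of the tuple `z` indexed by the elements of `I`,
taken in increasing order of the indices. -/
def subtuple {N : ℕ} (z : Fin N → Z) (I : Finset (Fin N)) : List Z :=
  (I.sort (· ≤ ·)).map z

/-- `I` is a compression set for the tuple `z` with respect to the algorithm `Alg`:
`Alg` applied to the subtuple indexed by `I` returns the same decision as `Alg`
applied to the whole tuple. -/
def IsCompression (Alg : List Z → X) {N : ℕ} (z : Fin N → Z) (I : Finset (Fin N)) : Prop :=
  Alg (subtuple z I) = Alg (List.ofFn z)

/-- `Alg` is permutation invariant. -/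
def PermInvariant (Alg : List Z → X) : Prop :=
  ∀ l l' : List Z, l.Perm l' → Alg l = Alg l'

/-- `Alg` is stable: if the decision made from a tuple satisfies an extra constraint,
then appending that constraint does not change the decision. -/
def Stable (mem : X → Z → Prop) (Alg : List Z → X) : Prop :=
  ∀ (l : List Z) (w : Z), mem (Alg l) w → Alg (l ++ [w]) = Alg l

/-- `Alg` is consistent: the decision satisfies all sampled constraints. -/
def Consistent (mem : X → Z → Prop) (Alg : List Z → X) : Prop :=
  ∀ (l : List Z), ∀ w ∈ l, mem (Alg l) w

/-- The compression size of `Alg` is at most `d`: every finite tuple admits a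
compression set of cardinality at most `d`. -/
def CompressionSizeLE (Alg : List Z → X) (d : ℕ) : Prop :=
  ∀ (N : ℕ) (z : Fin N → Z), ∃ I : Finset (Fin N), I.card ≤ d ∧ IsCompression Alg z I

/-- The unique-compression assumption for `d`: every tuple of length at least `d`
has exactly one compression set of cardinality `d`. -/
def UniqueCompression (Alg : List Z → X) (d : ℕ) : Prop :=
  ∀ (N : ℕ), d ≤ N → ∀ z : Fin N → Z,
    ∃! I : Finset (Fin N), I.card = d ∧ IsCompression Alg z I

/-- The risk (violation probability) of the decision `x` w.r.t. `P`. -/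
noncomputable def risk [MeasurableSpace Z] (mem : X → Z → Prop)
    (P : Measure Z) (x : X) : ℝ :=
  (P {w | ¬ mem x w}).toReal

/-- `σ` is a selection algorithm with discarding size `r`: it returns a subtuple
(subsequence) of its input that discards at most `r` constraints. -/
def IsSelection (σ : List Z → List Z) (r : ℕ) : Prop :=
  ∀ l : List Z, (σ l).Sublist l ∧ l.length - r ≤ (σ l).length

end Scenario

/-!
By stability, appending constraints that the current decision satisfies does not change it.
Hence if `l ⊆ l'` and `Alg l` satisfies all of `l'`, then by consistency both `Alg l` and
`Alg l'` equal the decision on `l ++ l'` up to permutation, so `Alg l' = Alg l`. The subtuples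
of `z ∘ j` over `I'` and of `z` over `I = j '' I'` contain the same constraints, so they yield
the same decision, namely `Alg z`; it satisfies every `z (j k)`, so it is also `Alg (z ∘ j)`.
-/

section

variable {X Z : Type*} {mem : X → Z → Prop} {Alg : List Z → X}

theorem mem_subtuple {N : ℕ} {z : Fin N → Z} {I : Finset (Fin N)} {w : Z} :
    w ∈ subtuple z I ↔ ∃ i ∈ I, z i = w := by
  simp [subtuple]

theorem subtuple_subset_ofFn {N : ℕ} (z : Fin N → Z) (I : Finset (Fin N)) :
    subtuple z I ⊆ List.ofFn z := fun _ hw =>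
  let ⟨i, _, hi⟩ := mem_subtuple.1 hw
  List.mem_ofFn.2 ⟨i, hi⟩

theorem mem_subtuple_comp_iff_mem_subtuple_image {N m : ℕ} (z : Fin N → Z) (j : Fin m → Fin N)
    (I' : Finset (Fin m)) {w : Z} :
    w ∈ subtuple (fun k => z (j k)) I' ↔ w ∈ subtuple z (I'.image j) := by
  simp only [mem_subtuple, Finset.exists_mem_image]

theorem Stable.append_eq (hstab : Stable mem Alg) {l rest : List Z}
    (h : ∀ w ∈ rest, mem (Alg l) w) : Alg (l ++ rest) = Alg l := by
  induction rest using List.reverseRecOn with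
  | nil => simp
  | append_singleton rest w ih =>
    have hrest : Alg (l ++ rest) = Alg l := ih fun w hw => h w (by simp [hw])
    rw [← List.append_assoc, hstab _ w (hrest ▸ h w (by simp)), hrest]

theorem alg_eq_of_subset (hcons : Consistent mem Alg) (hperm : PermInvariant Alg)
    (hstab : Stable mem Alg) {l l' : List Z} (hsub : l ⊆ l')
    (hmem : ∀ w ∈ l', mem (Alg l) w) : Alg l' = Alg l :=
  calc Alg l' = Alg (l' ++ l) := (hstab.append_eq fun w hw => hcons l' w (hsub hw)).symm
    _ = Alg (l ++ l') := hperm _ _ List.perm_append_comm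
    _ = Alg l := hstab.append_eq hmem

end

theorem stmt6_general {X Z : Type*}
    (mem : X → Z → Prop) (Alg : List Z → X)
    (hcons : Consistent mem Alg) (hperm : PermInvariant Alg) (hstab : Stable mem Alg)
    (N m : ℕ)
    (I : Finset (Fin N))
    (j : Fin m → Fin N) (I' : Finset (Fin m))
    (hIm : I'.image j = I)
    (z : Fin N → Z) (hz : IsCompression Alg z I) :
    IsCompression Alg (fun k => z (j k)) I' := by
  have hsame : ∀ w, w ∈ subtuple (fun k => z (j k)) I' ↔ w ∈ subtuple z I := fun w => by
    rw [← hIm, mem_subtuple_comp_iff_mem_subtuple_image]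
  have hdecision : Alg (subtuple (fun k => z (j k)) I') = Alg (List.ofFn z) :=
    (alg_eq_of_subset hcons hperm hstab (fun w hw => (hsame w).2 hw)
      fun w hw => hcons _ w ((hsame w).1 hw)).trans hz
  refine (alg_eq_of_subset hcons hperm hstab (subtuple_subset_ofFn _ I') fun w hw => ?_).symm
  obtain ⟨k, rfl⟩ := List.mem_ofFn.1 hw
  exact hdecision ▸ hcons _ _ (List.mem_ofFn.2 ⟨j k, rfl⟩)

/-- Lemma 2: if `I` is a compression set for `z` and the tuple `(j 1, ..., j m)`
covers `I` via `I'`, then `I'` is a compression set for the subtuple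
`(z (j 1), ..., z (j m))`. -/
theorem stmt6 {X Z : Type*}
    (mem : X → Z → Prop) (Alg : List Z → X)
    (hcons : Consistent mem Alg) (hperm : PermInvariant Alg) (hstab : Stable mem Alg)
    (d : ℕ) (hd : CompressionSizeLE Alg d)
    (N m : ℕ) (hN : d ≤ N) (hm : d ≤ m)
    (I : Finset (Fin N)) (hI : I.card = d)
    (j : Fin m → Fin N) (I' : Finset (Fin m)) (hI' : I'.card = d)
    (hIm : I'.image j = I)
    (z : Fin N → Z) (hz : IsCompression Alg z I) :
    IsCompression Alg (fun k => z (j k)) I' :=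
  stmt6_general mem Alg hcons hperm hstab N m I j I' hIm z hz
end

section
/- Let Alg be a consistent scenario decision algorithm that is permutation invariant and stable with ρ(Alg) ≤ d. Then every tuple z = (z_1,...,z_N) ∈ Z^N with N ≥ d admits a compression set of cardinality exactly d; consequently, for every ε ∈ (0,1] and probability measure P, the set {z ∈ Z^N : V_P(Alg(z)) > ε} equals the union over all I ⊆ {1,...,N} with |I| = d of the sets {z ∈ Z^N : I is a compression set for z and V_P(Alg(z)) > ε}. -/
/-! Every superset of a compression set is again a compression set, so a compression set of
size at most `d` can be padded to one of size exactly `d ≤ N`; the description of the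
high-risk event follows at once. -/

open MeasureTheory

lemma subtuple_insert_perm {Z : Type*} {N : ℕ} (z : Fin N → Z) {I : Finset (Fin N)}
    {j : Fin N} (hj : j ∉ I) : (subtuple z (insert j I)).Perm (subtuple z I ++ [z j]) := by
  have hsort : ((insert j I).sort (· ≤ ·)).Perm (j :: I.sort (· ≤ ·)) :=
    (Finset.sort_perm_toList _ _).trans <|
      (Finset.toList_insert hj).trans ((Finset.sort_perm_toList _ _).symm.cons j)
  exact (hsort.map z).trans (List.perm_append_singleton _ _).symm

namespace IsCompression

variable {X Z : Type*} {mem : X → Z → Prop} {Alg : List Z → X} {N : ℕ} {z : Fin N → Z}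
  {I J : Finset (Fin N)}

/-- By consistency `Alg z` satisfies the constraint `z j`, so by stability and permutation
invariance adding `z j` to the compressed subtuple does not change the decision. -/
lemma insert (hcons : Consistent mem Alg) (hperm : PermInvariant Alg) (hstab : Stable mem Alg)
    (h : IsCompression Alg z I) (j : Fin N) : IsCompression Alg z (insert j I) := by
  by_cases hj : j ∈ I
  · rwa [Finset.insert_eq_self.2 hj]
  have hsat : mem (Alg (subtuple z I)) (z j) := by
    rw [h]
    exact hcons _ (z j) (List.mem_ofFn.2 ⟨j, rfl⟩)
  unfold IsCompression
  rw [hperm _ _ (subtuple_insert_perm z hj), hstab _ _ hsat, h]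

lemma union_left (hcons : Consistent mem Alg) (hperm : PermInvariant Alg)
    (hstab : Stable mem Alg) (h : IsCompression Alg z I) (K : Finset (Fin N)) :
    IsCompression Alg z (K ∪ I) := by
  induction K using Finset.induction_on with
  | empty => rwa [Finset.empty_union]
  | insert j K _ ih =>
    rw [Finset.insert_union]
    exact ih.insert hcons hperm hstab j

lemma mono (hcons : Consistent mem Alg) (hperm : PermInvariant Alg) (hstab : Stable mem Alg)
    (h : IsCompression Alg z I) (hIJ : I ⊆ J) : IsCompression Alg z J := by
  simpa only [Finset.union_eq_left.2 hIJ] using h.union_left hcons hperm hstab J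

end IsCompression

lemma exists_isCompression_card_eq {X Z : Type*} {mem : X → Z → Prop} {Alg : List Z → X}
    (hcons : Consistent mem Alg) (hperm : PermInvariant Alg) (hstab : Stable mem Alg) {d : ℕ}
    (hd : CompressionSizeLE Alg d) {N : ℕ} (hN : d ≤ N) (z : Fin N → Z) :
    ∃ I : Finset (Fin N), I.card = d ∧ IsCompression Alg z I := by
  obtain ⟨I, hIcard, hI⟩ := hd N z
  obtain ⟨J, hIJ, hJcard⟩ :=
    Finset.exists_superset_card_eq hIcard (by rwa [Fintype.card_fin])
  exact ⟨J, hJcard, hI.mono hcons hperm hstab hIJ⟩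

/-- Every tuple of length `N ≥ d` admits a compression set of cardinality exactly
`d`; consequently the event of risk exceeding `ε` is the union, over index sets
`I` of cardinality `d`, of the events that `I` is a compression set and the risk
exceeds `ε`. -/
theorem stmt12 {X Z : Type*} [MeasurableSpace Z]
    (mem : X → Z → Prop) (Alg : List Z → X)
    (hcons : Consistent mem Alg) (hperm : PermInvariant Alg) (hstab : Stable mem Alg)
    (d : ℕ) (hd : CompressionSizeLE Alg d)
    (N : ℕ) (hN : d ≤ N) :
    (∀ z : Fin N → Z, ∃ I : Finset (Fin N), I.card = d ∧ IsCompression Alg z I) ∧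
    (∀ ε : ℝ, ε ∈ Set.Ioc (0 : ℝ) 1 → ∀ P : Measure Z, IsProbabilityMeasure P →
      {z : Fin N → Z | ε < risk mem P (Alg (List.ofFn z))}
        = ⋃ I ∈ {I : Finset (Fin N) | I.card = d},
            {z : Fin N → Z |
              IsCompression Alg z I ∧ ε < risk mem P (Alg (List.ofFn z))}) := by
  have hexact : ∀ z : Fin N → Z, ∃ I : Finset (Fin N), I.card = d ∧ IsCompression Alg z I :=
    fun z => exists_isCompression_card_eq hcons hperm hstab hd hN z
  refine ⟨hexact, fun ε _ P _ => ?_⟩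
  ext z
  simp only [Set.mem_ofPred_eq, Set.mem_iUnion, exists_prop]
  constructor
  · intro hz
    obtain ⟨I, hIcard, hI⟩ := hexact z
    exact ⟨I, hIcard, hI, hz⟩
  · rintro ⟨_, _, _, hz⟩
    exact hz
end

section
/- For all integers d ≥ 0 and N > d and all real ε ∈ (0,1], the confidence bound of Theorem 2 is at most the confidence bound derived from the wait-and-judge result, i.e., C(N,d) · min_{m = d,...,N} C(m,d)^{-1} (1-ε)^{N-m} ≤ N·C(N,d)·(1-ε)^{N-d} / (Σ_{m=d}^{N-1} C(m,d)·(1-ε)^{m-d}), where C(n,k) denotes the binomial coefficient. -/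
open MeasureTheory

/-- The confidence bound of Theorem 2 is at most the confidence bound derived
from the wait-and-judge result (Theorem 1, item 3)). -/
theorem stmt15 (d N : ℕ) (hdN : d < N) (ε : ℝ) (hε : ε ∈ Set.Ioc (0 : ℝ) 1) :
    (N.choose d : ℝ) *
      (Finset.Icc d N).inf' (Finset.nonempty_Icc.mpr hdN.le)
        (fun m => ((m.choose d : ℝ))⁻¹ * (1 - ε) ^ (N - m))
      ≤ (N : ℝ) * (N.choose d : ℝ) * (1 - ε) ^ (N - d) /
          ∑ m ∈ Finset.Icc d (N - 1), (m.choose d : ℝ) * (1 - ε) ^ (m - d) := by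
  obtain ⟨hε0, hε1⟩ := hε
  have h1ε : (0:ℝ) ≤ 1 - ε := by linarith
  set f : ℕ → ℝ := fun m => ((m.choose d : ℝ))⁻¹ * (1 - ε) ^ (N - m) with hf
  set I := (Finset.Icc d N).inf' (Finset.nonempty_Icc.mpr hdN.le) f with hI
  set S := ∑ m ∈ Finset.Icc d (N-1), (m.choose d : ℝ) * (1 - ε) ^ (m - d) with hS
  have hS1 : (1:ℝ) ≤ S := by
    have hd : d ∈ Finset.Icc d (N-1) := Finset.mem_Icc.mpr ⟨le_refl d, by omega⟩
    calc (1:ℝ) = (d.choose d : ℝ) * (1-ε)^(d-d) := by simp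
    _ ≤ S := Finset.single_le_sum (f := fun m => (m.choose d : ℝ) * (1-ε)^(m-d)) (fun m _ => by positivity) hd
  have hSpos : (0:ℝ) < S := lt_of_lt_of_le one_pos hS1
  rw [le_div_iff₀ hSpos]
  have hterm : ∀ m ∈ Finset.Icc d (N-1),
      I * ((m.choose d:ℝ) * (1-ε)^(m-d)) ≤ (1-ε)^(N-d) := by
    intro m hm
    rw [Finset.mem_Icc] at hm
    have hmN : m ∈ Finset.Icc d N := Finset.mem_Icc.mpr ⟨hm.1, by omega⟩
    have hinf : I ≤ f m := Finset.inf'_le f hmN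
    have hc : (0:ℝ) < (m.choose d : ℝ) := by exact_mod_cast Nat.choose_pos hm.1
    calc I * ((m.choose d:ℝ) * (1-ε)^(m-d))
        ≤ f m * ((m.choose d:ℝ) * (1-ε)^(m-d)) :=
          mul_le_mul_of_nonneg_right hinf (by positivity)
      _ = (1-ε)^(N-m) * (1-ε)^(m-d) := by
          simp only [hf]; field_simp
      _ = (1-ε)^(N-d) := by rw [← pow_add]; congr 1; omega
  have key : I * S ≤ (N:ℝ) * (1-ε)^(N-d) := by
    calc I * S = ∑ m ∈ Finset.Icc d (N-1), I * ((m.choose d:ℝ) * (1-ε)^(m-d)) := by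
          rw [hS, Finset.mul_sum]
      _ ≤ ∑ m ∈ Finset.Icc d (N-1), (1-ε)^(N-d) := Finset.sum_le_sum hterm
      _ = ((N-d : ℕ) : ℝ) * (1-ε)^(N-d) := by
          rw [Finset.sum_const, Nat.card_Icc, nsmul_eq_mul]
          congr 2
          omega
      _ ≤ (N:ℝ) * (1-ε)^(N-d) := by
          apply mul_le_mul_of_nonneg_right _ (by positivity)
          exact_mod_cast Nat.sub_le N d
  have hC : (0:ℝ) ≤ (N.choose d : ℝ) := by positivity
  calc (N.choose d : ℝ) * I * S = (N.choose d : ℝ) * (I * S) := by ring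
    _ ≤ (N.choose d : ℝ) * ((N:ℝ) * (1-ε)^(N-d)) := mul_le_mul_of_nonneg_left key hC
    _ = (N:ℝ) * (N.choose d : ℝ) * (1-ε)^(N-d) := by ring
end
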